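/- Let G be a connected simple graph on a finite vertex set of N ≥ 2 vertices. With λ₂(M) := inf { xᵀMx : ‖x‖ = 1, x ⊥ 𝟙 } and λ_max(M) := sup { xᵀMx : ‖x‖ = 1 }, the eigenratio Q(s) := λ₂(L̃_Mell(s))/λ_max(L̃_Mell(s)) of the Mellin-transformed path Laplacian satisfies lim_{s→0⁺} Q(s) = 1 and lim_{s→∞} Q(s) = λ₂(L)/λ_max(L), where L is the ordinary graph Laplacian of G. -/

import Mathlib

open Finset Matrix Filter Real Topology

/-- The `d`-path Laplacian matrix of a graph `G` on `Fin N`: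
`(L_d)_{ii} = #{j : dist(i,j) = d}`, `(L_d)_{ij} = -1` if `i ≠ j` and `dist(i,j) = d`,
and `0` otherwise. -/
noncomputable def pathLaplacian {N : ℕ} (G : SimpleGraph (Fin N)) (d : ℕ) :
    Matrix (Fin N) (Fin N) ℝ := fun i j =>
  if i = j then ((univ.filter fun k => G.dist i k = d).card : ℝ)
  else if G.dist i j = d then -1 else 0

/-- The diameter `d_max` of `G`: the maximum shortest-path distance over all pairs. -/
noncomputable def graphDiam {N : ℕ} (G : SimpleGraph (Fin N)) : ℕ :=
  univ.sup fun p : Fin N × Fin N => G.dist p.1 p.2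

/-- The Mellin-transformed path Laplacian `L̃_Mell(s) = Σ_{d=1}^{d_max} d^{-s} L_d`. -/
noncomputable def mellinLap {N : ℕ} (G : SimpleGraph (Fin N)) (s : ℝ) :
    Matrix (Fin N) (Fin N) ℝ :=
  ∑ d ∈ Icc 1 (graphDiam G), (d : ℝ) ^ (-s) • pathLaplacian G d

/-- The Laplace-transformed path Laplacian `L̃_Lapl(λ) = L_1 + Σ_{d=2}^{d_max} e^{-λd} L_d`. -/
noncomputable def laplaceLap {N : ℕ} (G : SimpleGraph (Fin N)) (lam : ℝ) :
    Matrix (Fin N) (Fin N) ℝ :=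
  pathLaplacian G 1 + ∑ d ∈ Icc 2 (graphDiam G), Real.exp (-(lam * d)) • pathLaplacian G d

/-- `λ₂(M)`: infimum of the quadratic form over Euclidean-unit vectors orthogonal to
the all-ones vector. -/
noncomputable def lamTwo {N : ℕ} (M : Matrix (Fin N) (Fin N) ℝ) : ℝ :=
  sInf {r | ∃ x : Fin N → ℝ, ∑ i, x i ^ 2 = 1 ∧ ∑ i, x i = 0 ∧ r = x ⬝ᵥ M.mulVec x}

/-- `λ_max(M)`: supremum of the quadratic form over Euclidean-unit vectors. -/
noncomputable def lamMax {N : ℕ} (M : Matrix (Fin N) (Fin N) ℝ) : ℝ :=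
  sSup {r | ∃ x : Fin N → ℝ, ∑ i, x i ^ 2 = 1 ∧ r = x ⬝ᵥ M.mulVec x}

/-!
λ₂ and λ_max are the minimum and maximum of the jointly continuous map (M, x) ↦ xᵀMx over
compact sets of x that do not depend on M, so both are continuous functions of M. The Mellin
Laplacian is continuous in s, and at s = 0 it equals Σ_d L_d, which for a connected graph is the
Laplacian N·I − J of the complete graph: its quadratic form is N on unit vectors orthogonal to
𝟙, so λ₂ = λ_max = N and the ratio tends to 1. As s → ∞, d^(−s) → 0 for every d ≥ 2, so the
Mellin Laplacian tends to L_1 = L, and λ_max(L) is at least the (positive) degree of a vertex.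
-/

section QuadraticForm

variable {N : ℕ}

lemma lamTwo_eq_sInf_image (M : Matrix (Fin N) (Fin N) ℝ) :
    lamTwo M = sInf ((fun x => x ⬝ᵥ M *ᵥ x) '' {x | ∑ i, x i ^ 2 = 1 ∧ ∑ i, x i = 0}) := by
  simp only [lamTwo, Set.image, Set.mem_ofPred_eq, eq_comm, and_assoc]

lemma lamMax_eq_sSup_image (M : Matrix (Fin N) (Fin N) ℝ) :
    lamMax M = sSup ((fun x => x ⬝ᵥ M *ᵥ x) '' {x | ∑ i, x i ^ 2 = 1}) := by
  simp only [lamMax, Set.image, Set.mem_ofPred_eq, eq_comm]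

lemma abs_le_one_of_sum_sq_eq_one {ι : Type*} [Fintype ι] {x : ι → ℝ} (hx : ∑ i, x i ^ 2 = 1)
    (i : ι) : |x i| ≤ 1 := by
  rw [← sq_le_one_iff_abs_le_one, ← hx]
  exact single_le_sum (f := fun j => x j ^ 2) (fun j _ => sq_nonneg _) (mem_univ i)

lemma isCompact_setOf_sum_sq_eq_one {ι : Type*} [Fintype ι] :
    IsCompact {x : ι → ℝ | ∑ i, x i ^ 2 = 1} := by
  refine Metric.isCompact_of_isClosed_isBounded (isClosed_eq (by fun_prop) continuous_const) ?_
  refine (Metric.isBounded_closedBall (x := 0) (r := 1)).subset fun x hx => ?_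
  rw [mem_closedBall_zero_iff, pi_norm_le_iff_of_nonneg zero_le_one]
  exact abs_le_one_of_sum_sq_eq_one hx

lemma continuous_lamTwo : Continuous (lamTwo : Matrix (Fin N) (Fin N) ℝ → ℝ) := by
  simp only [funext lamTwo_eq_sInf_image]
  exact (isCompact_setOf_sum_sq_eq_one.inter_right
    (isClosed_eq (by fun_prop) continuous_const)).continuous_sInf (by fun_prop)

lemma continuous_lamMax : Continuous (lamMax : Matrix (Fin N) (Fin N) ℝ → ℝ) := by
  simp only [funext lamMax_eq_sSup_image]
  exact isCompact_setOf_sum_sq_eq_one.continuous_sSup (by fun_prop)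

lemma dotProduct_mulVec_le_lamMax (M : Matrix (Fin N) (Fin N) ℝ) {x : Fin N → ℝ}
    (hx : ∑ i, x i ^ 2 = 1) : x ⬝ᵥ M *ᵥ x ≤ lamMax M := by
  rw [lamMax_eq_sSup_image]
  exact le_csSup (isCompact_setOf_sum_sq_eq_one.bddAbove_image (by fun_prop)) ⟨x, hx, rfl⟩

lemma exists_sum_sq_eq_one_sum_eq_zero (hN : 2 ≤ N) :
    ∃ x : Fin N → ℝ, ∑ i, x i ^ 2 = 1 ∧ ∑ i, x i = 0 := by
  let i₀ : Fin N := ⟨0, by omega⟩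
  let i₁ : Fin N := ⟨1, by omega⟩
  have hne : i₀ ≠ i₁ := by simp [i₀, i₁, Fin.ext_iff]
  refine ⟨(√2)⁻¹ • (Pi.single i₀ 1 - Pi.single i₁ 1), ?_, ?_⟩
  · have hsq : ∀ i, ((Pi.single i₀ 1 - Pi.single i₁ 1 : Fin N → ℝ) i) ^ 2
        = (Pi.single i₀ 1 : Fin N → ℝ) i + (Pi.single i₁ 1 : Fin N → ℝ) i := by
      intro i
      by_cases h₀ : i = i₀ <;> by_cases h₁ : i = i₁ <;>
        simp [h₀, h₁, hne]
    simp only [Pi.smul_apply, smul_eq_mul, mul_pow, ← mul_sum, hsq, sum_add_distrib,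
      sum_pi_single', mem_univ, if_true]
    norm_num
  · simp [← mul_sum, sum_sub_distrib]

end QuadraticForm

section CompleteGraph

variable {V : Type*} [Fintype V] [DecidableEq V]

lemma cast_degree_top (v : V) : ((⊤ : SimpleGraph V).degree v : ℝ) = Fintype.card V - 1 := by
  rw [SimpleGraph.complete_graph_degree, Nat.cast_sub (Fintype.card_pos_iff.2 ⟨v⟩)]
  simp

lemma lapMatrix_top :
    (⊤ : SimpleGraph V).lapMatrix ℝ =
      of fun i j => if i = j then (Fintype.card V : ℝ) - 1 else -1 := by
  ext i j
  by_cases h : i = j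
  · subst h; simp [SimpleGraph.lapMatrix, SimpleGraph.degMatrix, ← cast_degree_top i]
  · simp [SimpleGraph.lapMatrix, SimpleGraph.degMatrix, h]

lemma dotProduct_lapMatrix_top_mulVec (x : V → ℝ) :
    x ⬝ᵥ (⊤ : SimpleGraph V).lapMatrix ℝ *ᵥ x =
      Fintype.card V * ∑ i, x i ^ 2 - (∑ i, x i) ^ 2 := by
  have hmulVec : ∀ v,
      ((⊤ : SimpleGraph V).lapMatrix ℝ *ᵥ x) v = Fintype.card V * x v - ∑ u, x u := by
    intro v
    rw [SimpleGraph.lapMatrix_mulVec_apply, cast_degree_top, SimpleGraph.neighborFinset_top,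
      ← sum_compl_add_sum {v}, sum_singleton]
    ring
  have hterm : ∀ v, x v * (Fintype.card V * x v - ∑ u, x u)
      = Fintype.card V * x v ^ 2 - (∑ u, x u) * x v := fun v => by ring
  simp only [dotProduct, hmulVec, hterm, sum_sub_distrib, ← mul_sum]
  ring

end CompleteGraph

section CompleteGraphOnFin

variable {N : ℕ}

lemma lamTwo_lapMatrix_top (hN : 2 ≤ N) :
    lamTwo ((⊤ : SimpleGraph (Fin N)).lapMatrix ℝ) = N := by
  obtain ⟨x, hx⟩ := exists_sum_sq_eq_one_sum_eq_zero hN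
  have hconst : ∀ y ∈ {y : Fin N → ℝ | ∑ i, y i ^ 2 = 1 ∧ ∑ i, y i = 0},
      y ⬝ᵥ (⊤ : SimpleGraph (Fin N)).lapMatrix ℝ *ᵥ y = N := by
    rintro y ⟨hy₁, hy₀⟩
    simp [dotProduct_lapMatrix_top_mulVec, hy₁, hy₀]
  rw [lamTwo_eq_sInf_image, Set.image_congr hconst, Set.Nonempty.image_const ⟨x, hx⟩,
    csInf_singleton]

lemma lamMax_lapMatrix_top (hN : 2 ≤ N) :
    lamMax ((⊤ : SimpleGraph (Fin N)).lapMatrix ℝ) = N := by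
  obtain ⟨x, hx₁, hx₀⟩ := exists_sum_sq_eq_one_sum_eq_zero hN
  refine le_antisymm ?_ ?_
  · rw [lamMax_eq_sSup_image]
    refine csSup_le ⟨_, x, hx₁, rfl⟩ ?_
    rintro _ ⟨y, hy₁ : ∑ i, y i ^ 2 = 1, rfl⟩
    dsimp only
    rw [dotProduct_lapMatrix_top_mulVec, hy₁, Fintype.card_fin, mul_one]
    exact sub_le_self _ (sq_nonneg _)
  · simpa [dotProduct_lapMatrix_top_mulVec, hx₁, hx₀] using
      dotProduct_mulVec_le_lamMax ((⊤ : SimpleGraph (Fin N)).lapMatrix ℝ) hx₁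

end CompleteGraphOnFin

section PathLaplacian

variable {N : ℕ}

lemma dist_le_graphDiam (G : SimpleGraph (Fin N)) (i j : Fin N) : G.dist i j ≤ graphDiam G :=
  le_sup (f := fun p : Fin N × Fin N => G.dist p.1 p.2) (mem_univ (i, j))

lemma SimpleGraph.Connected.dist_mem_Icc_graphDiam {G : SimpleGraph (Fin N)} (hG : G.Connected)
    {i j : Fin N} (h : i ≠ j) : G.dist i j ∈ Icc 1 (graphDiam G) :=
  mem_Icc.2 ⟨hG.pos_dist_of_ne h, dist_le_graphDiam G i j⟩

lemma SimpleGraph.Connected.one_le_graphDiam {G : SimpleGraph (Fin N)} (hG : G.Connected)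
    (hN : 2 ≤ N) : 1 ≤ graphDiam G :=
  (hG.pos_dist_of_ne (u := ⟨0, by omega⟩) (v := ⟨1, by omega⟩) (by simp [Fin.ext_iff])).trans_le
    (dist_le_graphDiam G _ _)

lemma pathLaplacian_one (G : SimpleGraph (Fin N)) [DecidableRel G.Adj] :
    pathLaplacian G 1 = G.lapMatrix ℝ := by
  ext i j
  by_cases h : i = j
  · subst h
    simp [pathLaplacian, SimpleGraph.lapMatrix, SimpleGraph.degMatrix,
      SimpleGraph.dist_eq_one_iff_adj, ← SimpleGraph.card_neighborFinset_eq_degree,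
      SimpleGraph.neighborFinset_eq_filter]
  · simp [pathLaplacian, SimpleGraph.lapMatrix, SimpleGraph.degMatrix, h,
      SimpleGraph.dist_eq_one_iff_adj, apply_ite]

lemma sum_pathLaplacian_eq_lapMatrix_top {G : SimpleGraph (Fin N)} (hG : G.Connected) :
    ∑ d ∈ Icc 1 (graphDiam G), pathLaplacian G d = (⊤ : SimpleGraph (Fin N)).lapMatrix ℝ := by
  ext i j
  rw [Matrix.sum_apply, lapMatrix_top, of_apply]
  by_cases h : i = j
  · subst h
    have hfilter : ({k | G.dist i k ∈ Icc 1 (graphDiam G)} : Finset (Fin N)) = {i}ᶜ := by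
      ext k
      simp only [mem_filter, mem_univ, true_and, mem_compl, mem_singleton]
      refine ⟨?_, fun hk => hG.dist_mem_Icc_graphDiam (Ne.symm hk)⟩
      rintro hk rfl
      simp at hk
    simp only [pathLaplacian, if_true]
    rw [← Nat.cast_sum, sum_card_fiberwise_eq_card_filter, hfilter, card_compl, card_singleton,
      Fintype.card_fin, Nat.cast_sub i.pos]
    simp
  · simp only [pathLaplacian, h, if_false]
    rw [sum_ite_eq, if_pos (hG.dist_mem_Icc_graphDiam h)]

lemma mellinLap_zero {G : SimpleGraph (Fin N)} (hG : G.Connected) :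
    mellinLap G 0 = (⊤ : SimpleGraph (Fin N)).lapMatrix ℝ := by
  simp [mellinLap, sum_pathLaplacian_eq_lapMatrix_top hG]

lemma continuous_mellinLap (G : SimpleGraph (Fin N)) : Continuous (mellinLap G) := by
  unfold mellinLap
  refine continuous_finsetSum _ fun d hd => ?_
  have hd : (d : ℝ) ≠ 0 := by have := (mem_Icc.1 hd).1; positivity
  exact ((Real.continuous_const_rpow hd).comp continuous_neg).smul continuous_const

lemma tendsto_mellinLap_atTop {G : SimpleGraph (Fin N)} [DecidableRel G.Adj]
    (h : 1 ≤ graphDiam G) : Tendsto (mellinLap G) atTop (𝓝 (G.lapMatrix ℝ)) := by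
  have hcoef : ∀ d ∈ Icc 1 (graphDiam G),
      Tendsto (fun s : ℝ => (d : ℝ) ^ (-s)) atTop (𝓝 (if d = 1 then 1 else 0)) := by
    intro d hd
    rcases (mem_Icc.1 hd).1.eq_or_lt with rfl | hd₁
    · simp
    · rw [if_neg hd₁.ne']
      exact (tendsto_rpow_atBot_of_base_gt_one _ (by exact_mod_cast hd₁)).comp
        tendsto_neg_atTop_atBot
  have hlim : ∑ d ∈ Icc 1 (graphDiam G), (if d = 1 then (1 : ℝ) else 0) • pathLaplacian G d
      = G.lapMatrix ℝ := by
    simp [ite_smul, sum_ite_eq', h, pathLaplacian_one G]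
  rw [← hlim]
  exact tendsto_finsetSum _ fun d hd => (hcoef d hd).smul_const (pathLaplacian G d)

lemma degree_le_lamMax_lapMatrix (G : SimpleGraph (Fin N)) [DecidableRel G.Adj] (i : Fin N) :
    (G.degree i : ℝ) ≤ lamMax (G.lapMatrix ℝ) := by
  simpa [SimpleGraph.lapMatrix, SimpleGraph.degMatrix] using
    dotProduct_mulVec_le_lamMax (G.lapMatrix ℝ) (x := Pi.single i 1)
      (by simp [Pi.single_apply, ite_pow])

end PathLaplacian

/-- The eigenratio `Q(s) = λ₂(L̃_Mell(s))/λ_max(L̃_Mell(s))` satisfies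
`lim_{s→0⁺} Q(s) = 1` and `lim_{s→∞} Q(s) = λ₂(L)/λ_max(L)`, where `L` is the ordinary
graph Laplacian of `G`. -/
theorem eigenratio_mellinLap_limits {N : ℕ} (G : SimpleGraph (Fin N)) [DecidableRel G.Adj]
    (hG : G.Connected) (hN : 2 ≤ N) :
    Filter.Tendsto (fun s : ℝ => lamTwo (mellinLap G s) / lamMax (mellinLap G s))
        (𝓝[>] 0) (𝓝 1) ∧
      Filter.Tendsto (fun s : ℝ => lamTwo (mellinLap G s) / lamMax (mellinLap G s))
        Filter.atTop (𝓝 (lamTwo (G.lapMatrix ℝ) / lamMax (G.lapMatrix ℝ))) := by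
  constructor
  · have htwo₀ : lamTwo (mellinLap G 0) = N := by
      rw [mellinLap_zero hG, lamTwo_lapMatrix_top hN]
    have hmax₀ : lamMax (mellinLap G 0) = N := by
      rw [mellinLap_zero hG, lamMax_lapMatrix_top hN]
    have hN₀ : (N : ℝ) ≠ 0 := by positivity
    have hcont : ContinuousAt (fun s => lamTwo (mellinLap G s) / lamMax (mellinLap G s)) 0 :=
      (continuous_lamTwo.comp (continuous_mellinLap G)).continuousAt.div
        (continuous_lamMax.comp (continuous_mellinLap G)).continuousAt (hmax₀ ▸ hN₀)
    have hQ₀ : lamTwo (mellinLap G 0) / lamMax (mellinLap G 0) = 1 := by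
      rw [htwo₀, hmax₀, div_self hN₀]
    exact hQ₀ ▸ hcont.tendsto.mono_left nhdsWithin_le_nhds
  · have hL := tendsto_mellinLap_atTop (hG.one_le_graphDiam hN)
    have : Nontrivial (Fin N) := Fin.nontrivial_iff_two_le.2 hN
    have hdeg : 0 < G.degree ⟨0, by omega⟩ := hG.preconnected.degree_pos_of_nontrivial _
    exact ((continuous_lamTwo.tendsto _).comp hL).div ((continuous_lamMax.tendsto _).comp hL)
      (((Nat.cast_pos.2 hdeg).trans_le (degree_le_lamMax_lapMatrix G _)).ne')
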